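/- The clone generated by binary AND, binary OR, and binary XOR equals the clone generated by g₀ together with the constant function false, where g₀(x,y,z) = x ∨ (y ∧ ¬z): a Boolean function f : (Fin n → Bool) → Bool belongs to the first clone if and only if it belongs to the second. -/

import Mathlib

/-- The clone generated by a set `B` of Boolean functions: the smallest family containing all
projections and `B`, and closed under composition. -/
inductive InClone (B : (k : ℕ) → ((Fin k → Bool) → Bool) → Prop) :
    (n : ℕ) → ((Fin n → Bool) → Bool) → Prop
  | proj {n : ℕ} (i : Fin n) : InClone B n (fun x => x i)
  | base {k : ℕ} {g : (Fin k → Bool) → Bool} (hg : B k g) : InClone B k g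
  | comp {k n : ℕ} {g : (Fin k → Bool) → Bool} {h : Fin k → ((Fin n → Bool) → Bool)}
      (hg : InClone B k g) (hh : ∀ i, InClone B n (h i)) :
      InClone B n (fun x => g (fun i => h i x))

/-- g₀(x,y,z) = x ∨ (y ∧ ¬z). -/
def g0 : (Fin 3 → Bool) → Bool := fun x => x 0 || (x 1 && !x 2)

/-- The generating set {∧, ∨, ⊕}. -/
inductive XorBase : (k : ℕ) → ((Fin k → Bool) → Bool) → Prop
  | and : XorBase 2 (fun x => x 0 && x 1)
  | or : XorBase 2 (fun x => x 0 || x 1)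
  | xor : XorBase 2 (fun x => xor (x 0) (x 1))

/-- The generating set {g₀, 0}. -/
inductive G0ZeroBase : (k : ℕ) → ((Fin k → Bool) → Bool) → Prop
  | g0 : G0ZeroBase 3 g0
  | zero : G0ZeroBase 1 (fun _ => false)

/-!
Both clones contain the projections and are closed under composition, so it suffices to put
each generator of one clone into the other. With `0` at hand, `g₀` yields `x ∧ ¬y = g₀(0, x, y)`
and `x ∨ y = g₀(x, y, 0)`, from which `x ∧ y = x ∧ ¬(x ∧ ¬y)` and
`x ⊕ y = (x ∧ ¬y) ∨ (y ∧ ¬x)`. Conversely `0 = x ⊕ x` and `g₀(x, y, z) = x ∨ (y ∧ (y ⊕ z))`.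
-/

namespace InClone

variable {B C : (k : ℕ) → ((Fin k → Bool) → Bool) → Prop} {n : ℕ}

theorem congr {f g : (Fin n → Bool) → Bool} (hf : InClone B n f) (e : ∀ x, f x = g x) :
    InClone B n g :=
  funext e ▸ hf

theorem comp₂ {g : (Fin 2 → Bool) → Bool} (hg : InClone B 2 g)
    {h₀ h₁ : (Fin n → Bool) → Bool} (h₀_mem : InClone B n h₀) (h₁_mem : InClone B n h₁) :
    InClone B n (fun x => g ![h₀ x, h₁ x]) := by
  refine (comp hg (h := ![h₀, h₁]) fun i => ?_).congr fun x => ?_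
  · fin_cases i <;> assumption
  · congr 1; funext i; fin_cases i <;> rfl

theorem comp₃ {g : (Fin 3 → Bool) → Bool} (hg : InClone B 3 g)
    {h₀ h₁ h₂ : (Fin n → Bool) → Bool} (h₀_mem : InClone B n h₀) (h₁_mem : InClone B n h₁)
    (h₂_mem : InClone B n h₂) :
    InClone B n (fun x => g ![h₀ x, h₁ x, h₂ x]) := by
  refine (comp hg (h := ![h₀, h₁, h₂]) fun i => ?_).congr fun x => ?_
  · fin_cases i <;> assumption
  · congr 1; funext i; fin_cases i <;> rfl

theorem mono (hBC : ∀ {k g}, B k g → InClone C k g) {f : (Fin n → Bool) → Bool}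
    (hf : InClone B n f) : InClone C n f := by
  induction hf with
  | proj i => exact proj i
  | base hg => exact hBC hg
  | comp _ _ ihg ihh => exact comp ihg ihh

end InClone

namespace G0ZeroBase

variable {n : ℕ} [NeZero n] {f g : (Fin n → Bool) → Bool}

theorem inClone_false : InClone G0ZeroBase n (fun _ => false) :=
  InClone.comp (g := fun _ => false) (.base zero) (h := fun _ x => x 0) fun _ => .proj 0

theorem inClone_andNot (hf : InClone G0ZeroBase n f) (hg : InClone G0ZeroBase n g) :
    InClone G0ZeroBase n (fun x => f x && !g x) :=
  (InClone.comp₃ (.base g0) inClone_false hf hg).congr fun x => by simp [_root_.g0]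

theorem inClone_or (hf : InClone G0ZeroBase n f) (hg : InClone G0ZeroBase n g) :
    InClone G0ZeroBase n (fun x => f x || g x) :=
  (InClone.comp₃ (.base g0) hf hg inClone_false).congr fun x => by simp [_root_.g0]

theorem inClone_and (hf : InClone G0ZeroBase n f) (hg : InClone G0ZeroBase n g) :
    InClone G0ZeroBase n (fun x => f x && g x) :=
  (inClone_andNot hf (inClone_andNot hf hg)).congr fun x => by cases f x <;> cases g x <;> rfl

theorem inClone_xor (hf : InClone G0ZeroBase n f) (hg : InClone G0ZeroBase n g) :
    InClone G0ZeroBase n (fun x => xor (f x) (g x)) :=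
  (inClone_or (inClone_andNot hf hg) (inClone_andNot hg hf)).congr fun x => by
    cases f x <;> cases g x <;> rfl

end G0ZeroBase

theorem XorBase.inClone_g0ZeroBase {k : ℕ} {g : (Fin k → Bool) → Bool} (hg : XorBase k g) :
    InClone G0ZeroBase k g := by
  cases hg with
  | and => exact G0ZeroBase.inClone_and (.proj 0) (.proj 1)
  | or => exact G0ZeroBase.inClone_or (.proj 0) (.proj 1)
  | xor => exact G0ZeroBase.inClone_xor (.proj 0) (.proj 1)

theorem G0ZeroBase.inClone_xorBase {k : ℕ} {g : (Fin k → Bool) → Bool} (hg : G0ZeroBase k g) :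
    InClone XorBase k g := by
  cases hg with
  | zero => exact (InClone.comp₂ (.base XorBase.xor) (.proj 0) (.proj 0)).congr fun x => by simp
  | g0 =>
    have hxor : InClone XorBase 3 (fun x => xor (x 1) (x 2)) :=
      InClone.comp₂ (.base XorBase.xor) (.proj 1) (.proj 2)
    have hand : InClone XorBase 3 (fun x => x 1 && xor (x 1) (x 2)) :=
      InClone.comp₂ (.base XorBase.and) (.proj 1) hxor
    refine (InClone.comp₂ (.base XorBase.or) (.proj 0) hand).congr fun x => ?_
    simp only [_root_.g0, Matrix.cons_val]
    cases x 0 <;> cases x 1 <;> cases x 2 <;> rfl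

/-- [∧, ∨, ⊕] = [g₀, 0]. -/
theorem clone_xor_eq_clone_g0_zero {n : ℕ} (f : (Fin n → Bool) → Bool) :
    InClone XorBase n f ↔ InClone G0ZeroBase n f :=
  ⟨InClone.mono XorBase.inClone_g0ZeroBase, InClone.mono G0ZeroBase.inClone_xorBase⟩
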